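/- arXiv:1402.0425 — 4 statements merged into one kernel-verified Lean document; each statement's English description precedes it below -/
import Mathlib

section
/- Let H be a complex Hilbert space with inner product ⟨·,·⟩ conjugate-linear in the first argument, A a unitary operator on H, and φ₀ ∈ H. Let f be an integrable real-valued function on [0,2π) whose Fourier coefficients satisfy (1/2π)∫₀^{2π} f(p) e^{-ijp} dp = ⟨A^j φ₀, φ₀⟩ for all j ∈ ℤ, and let g be a real-valued integrable function on [0,2π) with f(p)·g(p) = 1 for almost every p, whose Fourier coefficients c_l = (1/2π)∫₀^{2π} g(p) e^{-ilp} dp satisfy Σ_{l∈ℤ}|c_l| < ∞. Define X = Σ_{k∈ℤ} c_k A^k (norm-convergent) and Ψ_n = A^n X φ₀ for n ∈ ℤ. Then ⟨Ψ_n, A^k φ₀⟩ = δ_{n,k} for all n, k ∈ ℤ, i.e. the family {Ψ_n} is biorthogonal to the family {A^k φ₀}. -/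
/-!
Write `f̂`, `ĝ` for the Fourier coefficients on `[0, 2π)`, so `c = ĝ`. Unitarity gives
`⟪A^m φ₀, X φ₀⟫ = ∑ₗ ĝ(l) ⟪A^(m-l) φ₀, φ₀⟫ = ∑ₗ ĝ(l) f̂(m - l)`, and this convolution is the
`m`-th coefficient of `f g = 1`, i.e. `δ_{m,0}`. The convolution identity holds because the
absolutely convergent series `∑ ĝ(l) e^{ilp}` has the same coefficients as `g`, hence equals `g`
almost everywhere (an integrable function orthogonal to all `e^{ijp}` is, by density, orthogonal
to every continuous periodic function, in particular to every test function on `(0, 2π)`); the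
term-by-term integration against `f` is justified by `∑ |ĝ(l)| < ∞`.
-/

open MeasureTheory Complex Set
open scoped Real InnerProductSpace

noncomputable def fourierCoeffIco (v : ℝ → ℂ) (j : ℤ) : ℂ :=
  (1 / (2 * π) : ℂ) * ∫ p in Ico (0:ℝ) (2 * π), v p * exp (-I * j * p)

noncomputable def trigSeries (c : ℤ → ℂ) (q : ℝ) : ℂ :=
  ∑' l : ℤ, c l * exp (I * l * q)

lemma norm_exp_I_mul_int_mul (j : ℤ) (q : ℝ) : ‖exp (I * j * q)‖ = 1 := by
  simp [Complex.norm_exp]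

lemma norm_exp_neg_I_mul_int_mul (j : ℤ) (q : ℝ) : ‖exp (-I * j * q)‖ = 1 := by
  simp [Complex.norm_exp]

lemma exp_neg_I_mul_intCast_sub_mul (m l : ℤ) (q : ℝ) :
    exp (-I * ((m - l : ℤ) : ℂ) * q) = exp (I * l * q) * exp (-I * m * q) := by
  rw [← Complex.exp_add]
  push_cast
  ring_nf

lemma continuous_exp_mul_ofReal (a : ℂ) : Continuous fun q : ℝ => exp (a * q) := by
  fun_prop

lemma integrableOn_Ico_of_continuous {v : ℝ → ℂ} (hv : Continuous v) (a b : ℝ) :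
    IntegrableOn v (Ico a b) :=
  (hv.integrableOn_Icc).mono_set Ico_subset_Icc_self

lemma integral_exp_neg_I_mul_int_mul (m : ℤ) :
    ∫ q in Ico (0:ℝ) (2 * π), exp (-I * m * q) = if m = 0 then (2 * π : ℂ) else 0 := by
  split_ifs with hm
  · simp [hm, Real.pi_pos.le]
  · have hc : -I * m ≠ 0 := by simp [hm, I_ne_zero]
    rw [Measure.restrict_congr_set Ico_ae_eq_Ioc,
      ← intervalIntegral.integral_of_le (by positivity), integral_exp_mul_complex hc]
    have hper : exp (-I * m * (2 * π : ℝ)) = 1 := by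
      rw [← exp_int_mul_two_pi_mul_I (-m)]
      push_cast
      ring_nf
    rw [hper]
    simp

lemma fourierCoeffIco_one (m : ℤ) :
    fourierCoeffIco (fun _ => 1) m = if m = 0 then 1 else 0 := by
  simp only [fourierCoeffIco, one_mul, integral_exp_neg_I_mul_int_mul]
  split_ifs
  · field_simp
  · rw [mul_zero]

section Uniqueness

variable {T : ℝ} [Fact (0 < T)] {v : ℝ → ℂ}

lemma integrableOn_continuousMap_mul (hv : IntegrableOn v (Ico 0 T)) (h : C(AddCircle T, ℂ)) :
    IntegrableOn (fun q : ℝ => h q * v q) (Ico 0 T) :=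
  hv.bdd_mul (h.continuous.comp (AddCircle.continuous_mk' T)).aestronglyMeasurable
    (Filter.Eventually.of_forall fun _ => h.norm_coe_le_norm _)

noncomputable def integralMulCLM (v : ℝ → ℂ) (hv : IntegrableOn v (Ico 0 T)) :
    C(AddCircle T, ℂ) →L[ℂ] ℂ :=
  LinearMap.mkContinuous
    { toFun := fun h => ∫ q in Ico 0 T, h q * v q
      map_add' := fun h₁ h₂ => by
        simp only [ContinuousMap.add_apply, add_mul]
        exact integral_add (integrableOn_continuousMap_mul hv h₁)
          (integrableOn_continuousMap_mul hv h₂)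
      map_smul' := fun a h => by
        simp only [ContinuousMap.smul_apply, smul_mul_assoc, RingHom.id_apply]
        exact integral_smul a _ }
    (∫ q in Ico 0 T, ‖v q‖) fun h =>
      calc ‖∫ q in Ico 0 T, h q * v q‖ ≤ ∫ q in Ico 0 T, ‖h‖ * ‖v q‖ :=
            norm_integral_le_of_norm_le (hv.norm.const_mul _) <|
              Filter.Eventually.of_forall fun q => by
                rw [norm_mul]
                exact mul_le_mul_of_nonneg_right (h.norm_coe_le_norm _) (norm_nonneg _)
        _ = (∫ q in Ico 0 T, ‖v q‖) * ‖h‖ := by rw [integral_const_mul, mul_comm]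

lemma integral_continuousMap_mul_eq_zero (hv : IntegrableOn v (Ico 0 T))
    (hfourier : ∀ n : ℤ, ∫ q in Ico 0 T, fourier n (q : AddCircle T) * v q = 0)
    (h : C(AddCircle T, ℂ)) : ∫ q in Ico 0 T, h q * v q = 0 := by
  have hdense : Dense (Submodule.span ℂ (range (@fourier T)) : Set C(AddCircle T, ℂ)) :=
    Submodule.dense_iff_topologicalClosure_eq_top.2 span_fourier_closure_eq_top
  have hzero : integralMulCLM v hv = 0 :=
    ContinuousLinearMap.ext_on hdense fun _ ⟨n, hn⟩ => hn ▸ hfourier n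
  exact congrArg (· h) hzero

lemma ae_eq_zero_of_integral_continuousMap_mul_eq_zero (hv : IntegrableOn v (Ico 0 T))
    (hv₀ : ∀ h : C(AddCircle T, ℂ), ∫ q in Ico 0 T, h q * v q = 0) :
    v =ᵐ[volume.restrict (Ico 0 T)] 0 := by
  have hIoo : ∀ᵐ x, x ∈ Ioo 0 T → v x = 0 := by
    refine isOpen_Ioo.ae_eq_zero_of_integral_contDiff_smul_eq_zero
      (hv.mono_set Ioo_subset_Ico_self).locallyIntegrableOn fun ψ hψ _ hψU => ?_
    have hψ_out : ∀ x ∉ Ioo 0 T, ψ x = 0 := fun x hx =>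
      image_eq_zero_of_notMem_tsupport fun hmem => hx (hψU hmem)
    -- `ψ` vanishes at `0` and `T`, so it descends to a continuous function on the circle.
    let h : C(AddCircle T, ℂ) :=
      ⟨AddCircle.liftIco T 0 fun x => (ψ x : ℂ),
        AddCircle.liftIco_zero_continuous
          (by simp [hψ_out 0 (by simp), hψ_out T (by simp)])
          (continuous_ofReal.comp hψ.continuous).continuousOn⟩
    rw [← setIntegral_eq_integral_of_forall_compl_eq_zero (s := Ico 0 T) fun x hx => by
      simp [hψ_out x fun h => hx (Ioo_subset_Ico_self h)], ← hv₀ h]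
    refine setIntegral_congr_fun measurableSet_Ico fun q hq => ?_
    simp [h, AddCircle.liftIco_zero_coe_apply hq, real_smul]
  rw [← Measure.restrict_congr_set Ioo_ae_eq_Ico]
  exact (ae_restrict_iff' measurableSet_Ioo).2 hIoo

end Uniqueness

section FourierCoeffIco

variable {v w : ℝ → ℂ}

lemma integrableOn_mul_exp (hv : IntegrableOn v (Ico 0 (2 * π))) (j : ℤ) :
    IntegrableOn (fun q => v q * exp (-I * j * q)) (Ico 0 (2 * π)) :=
  hv.mul_bdd (continuous_exp_mul_ofReal _).aestronglyMeasurable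
    (Filter.Eventually.of_forall fun q => (norm_exp_neg_I_mul_int_mul j q).le)

lemma fourierCoeffIco_congr_ae (h : v =ᵐ[volume.restrict (Ico 0 (2 * π))] w) :
    fourierCoeffIco v = fourierCoeffIco w := by
  ext j
  refine congrArg _ (integral_congr_ae ?_)
  filter_upwards [h] with q hq
  rw [hq]

lemma fourierCoeffIco_sub (hv : IntegrableOn v (Ico 0 (2 * π)))
    (hw : IntegrableOn w (Ico 0 (2 * π))) (j : ℤ) :
    fourierCoeffIco (v - w) j = fourierCoeffIco v j - fourierCoeffIco w j := by
  simp only [fourierCoeffIco, Pi.sub_apply, sub_mul,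
    integral_sub (integrableOn_mul_exp hv j) (integrableOn_mul_exp hw j), mul_sub]

lemma fourier_coe_eq_exp (n : ℤ) (q : ℝ) :
    fourier n (q : AddCircle (2 * π)) = exp (I * n * q) := by
  rw [fourier_coe_apply]
  congr 1
  push_cast
  field_simp

lemma ae_eq_zero_of_fourierCoeffIco_eq_zero (hv : IntegrableOn v (Ico 0 (2 * π)))
    (h : ∀ j, fourierCoeffIco v j = 0) : v =ᵐ[volume.restrict (Ico 0 (2 * π))] 0 := by
  have : Fact (0 < 2 * π) := ⟨by positivity⟩
  refine ae_eq_zero_of_integral_continuousMap_mul_eq_zero hv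
    (integral_continuousMap_mul_eq_zero hv fun n => ?_)
  have hcoeff := (mul_eq_zero.1 (h (-n))).resolve_left (by simp [Real.pi_ne_zero])
  rw [← hcoeff]
  refine setIntegral_congr_fun measurableSet_Ico fun q _ => ?_
  rw [fourier_coe_eq_exp, mul_comm]
  push_cast
  ring_nf

lemma ae_eq_of_fourierCoeffIco_eq (hv : IntegrableOn v (Ico 0 (2 * π)))
    (hw : IntegrableOn w (Ico 0 (2 * π))) (h : ∀ j, fourierCoeffIco v j = fourierCoeffIco w j) :
    v =ᵐ[volume.restrict (Ico 0 (2 * π))] w := by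
  filter_upwards [ae_eq_zero_of_fourierCoeffIco_eq_zero (hv.sub hw)
    fun j => by rw [fourierCoeffIco_sub hv hw, h, sub_self]] with q hq
  exact sub_eq_zero.1 hq

end FourierCoeffIco

section TrigSeries

variable {c : ℤ → ℂ}

lemma continuous_trigSeries (hc : Summable fun l => ‖c l‖) : Continuous (trigSeries c) :=
  continuous_tsum (fun l => continuous_const.mul (continuous_exp_mul_ofReal _)) hc
    fun l q => by rw [norm_mul, norm_exp_I_mul_int_mul, mul_one]

lemma hasSum_mul_fourierCoeffIco_sub {v : ℝ → ℂ} (hv : IntegrableOn v (Ico 0 (2 * π)))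
    (hc : Summable fun l => ‖c l‖) (m : ℤ) :
    HasSum (fun l => c l * fourierCoeffIco v (m - l))
      (fourierCoeffIco (fun q => v q * trigSeries c q) m) := by
  set F : ℤ → ℝ → ℂ := fun l q => c l * (v q * exp (-I * ((m - l : ℤ) : ℂ) * q))
  have hF_int (l : ℤ) : IntegrableOn (F l) (Ico 0 (2 * π)) :=
    (integrableOn_mul_exp hv (m - l)).const_mul (c l)
  have hF_norm : Summable fun l => ∫ q in Ico 0 (2 * π), ‖F l q‖ := by
    refine (hc.mul_right (∫ q in Ico 0 (2 * π), ‖v q‖)).congr fun l => ?_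
    simp only [F, norm_mul, norm_exp_neg_I_mul_int_mul, mul_one, integral_const_mul]
  have hF_tsum (q : ℝ) : ∑' l, F l q = v q * trigSeries c q * exp (-I * m * q) := by
    simp only [F, trigSeries, exp_neg_I_mul_intCast_sub_mul, ← tsum_mul_left, ← tsum_mul_right]
    exact tsum_congr fun l => by ring
  have hsum := (hasSum_integral_of_summable_integral_norm hF_int hF_norm).mul_left
    (1 / (2 * π) : ℂ)
  simp only [F, hF_tsum, integral_const_mul] at hsum
  simpa only [fourierCoeffIco, mul_left_comm (1 / (2 * π) : ℂ)] using hsum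

lemma fourierCoeffIco_trigSeries (hc : Summable fun l => ‖c l‖) (j : ℤ) :
    fourierCoeffIco (trigSeries c) j = c j := by
  have hsum := hasSum_mul_fourierCoeffIco_sub
    (integrableOn_Ico_of_continuous (continuous_const (y := (1 : ℂ))) 0 (2 * π)) hc j
  simp only [one_mul, fourierCoeffIco_one, sub_eq_zero, mul_ite, mul_one, mul_zero] at hsum
  refine hsum.unique ?_
  simpa using hasSum_single (f := fun l => if j = l then c l else 0) j fun l hl => if_neg hl.symm

lemma ae_eq_trigSeries_fourierCoeffIco {g : ℝ → ℂ} (hg : IntegrableOn g (Ico 0 (2 * π)))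
    (hc : Summable fun l => ‖fourierCoeffIco g l‖) :
    g =ᵐ[volume.restrict (Ico 0 (2 * π))] trigSeries (fourierCoeffIco g) :=
  ae_eq_of_fourierCoeffIco_eq hg (integrableOn_Ico_of_continuous (continuous_trigSeries hc) _ _)
    fun j => (fourierCoeffIco_trigSeries hc j).symm

lemma hasSum_fourierCoeffIco_mul_fourierCoeffIco_sub {f g : ℝ → ℂ}
    (hf : IntegrableOn f (Ico 0 (2 * π))) (hg : IntegrableOn g (Ico 0 (2 * π)))
    (hc : Summable fun l => ‖fourierCoeffIco g l‖) (m : ℤ) :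
    HasSum (fun l => fourierCoeffIco g l * fourierCoeffIco f (m - l))
      (fourierCoeffIco (fun q => f q * g q) m) := by
  have hfg : (fun q => f q * trigSeries (fourierCoeffIco g) q)
      =ᵐ[volume.restrict (Ico 0 (2 * π))] fun q => f q * g q := by
    filter_upwards [ae_eq_trigSeries_fourierCoeffIco hg hc] with q hq
    rw [hq]
  rw [← fourierCoeffIco_congr_ae hfg]
  exact hasSum_mul_fourierCoeffIco_sub hf hc m

end TrigSeries

section Unitary

variable {H : Type*} [NormedAddCommGroup H] [InnerProductSpace ℂ H] [CompleteSpace H]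
  (A : unitary (H →L[ℂ] H))

lemma inner_zpow_apply_zpow_apply (a b : ℤ) (x y : H) :
    ⟪((A ^ a : unitary (H →L[ℂ] H)) : H →L[ℂ] H) x,
        ((A ^ b : unitary (H →L[ℂ] H)) : H →L[ℂ] H) y⟫_ℂ
      = ⟪((A ^ (a - b) : unitary (H →L[ℂ] H)) : H →L[ℂ] H) x, y⟫_ℂ := by
  conv_lhs => rw [show a = b + (a - b) by ring, zpow_add]
  exact Unitary.inner_map_map (A ^ b) _ y

lemma hasSum_inner_zpow_apply {c : ℤ → ℂ} {X : H →L[ℂ] H}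
    (hX : HasSum (fun k : ℤ => c k • ((A ^ k : unitary (H →L[ℂ] H)) : H →L[ℂ] H)) X)
    (φ : H) (m : ℤ) :
    HasSum (fun l => c l * ⟪((A ^ (m - l) : unitary (H →L[ℂ] H)) : H →L[ℂ] H) φ, φ⟫_ℂ)
      ⟪((A ^ m : unitary (H →L[ℂ] H)) : H →L[ℂ] H) φ, X φ⟫_ℂ := by
  have hXφ := (ContinuousLinearMap.apply ℂ H φ).hasSum hX
  have hinner := (innerSL ℂ (((A ^ m : unitary (H →L[ℂ] H)) : H →L[ℂ] H) φ)).hasSum hXφ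
  simpa only [ContinuousLinearMap.apply_apply, FunLike.coe_smul, Pi.smul_apply,
    innerSL_apply_apply, inner_smul_right, inner_zpow_apply_zpow_apply] using hinner

end Unitary

/-- Given a unitary `A`, a vector `φ₀`, a real integrable function `f` on
`[0, 2π)` whose Fourier coefficients are the overlaps `⟪A^j φ₀, φ₀⟫`, and a real
integrable `g` with `f·g = 1` a.e. whose Fourier coefficients `c_l` are absolutely
summable, the operator `X = ∑ c_k A^k` (norm convergent) produces vectors
`Ψ_n = A^n X φ₀` biorthogonal to the family `{A^k φ₀}`. -/
theorem stmt4 {H : Type*} [NormedAddCommGroup H] [InnerProductSpace ℂ H] [CompleteSpace H]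
    (A : unitary (H →L[ℂ] H)) (φ₀ : H) (f g : ℝ → ℝ)
    (hf : IntegrableOn f (Set.Ico 0 (2 * Real.pi)))
    (hg : IntegrableOn g (Set.Ico 0 (2 * Real.pi)))
    (hfcoef : ∀ j : ℤ,
      (1 / (2 * Real.pi) : ℂ) *
          ∫ p in Set.Ico (0:ℝ) (2 * Real.pi), (f p : ℂ) * Complex.exp (-Complex.I * j * p) =
        ⟪((A ^ j : unitary (H →L[ℂ] H)) : H →L[ℂ] H) φ₀, φ₀⟫_ℂ)
    (hfg : ∀ᵐ p ∂(volume.restrict (Set.Ico (0:ℝ) (2 * Real.pi))), f p * g p = 1)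
    (c : ℤ → ℂ)
    (hc : ∀ l : ℤ, c l = (1 / (2 * Real.pi) : ℂ) *
        ∫ p in Set.Ico (0:ℝ) (2 * Real.pi), (g p : ℂ) * Complex.exp (-Complex.I * l * p))
    (hcsum : Summable fun l : ℤ => ‖c l‖)
    (X : H →L[ℂ] H)
    (hX : HasSum (fun k : ℤ => c k • ((A ^ k : unitary (H →L[ℂ] H)) : H →L[ℂ] H)) X)
    (Ψ : ℤ → H)
    (hΨ : ∀ n : ℤ, Ψ n = ((A ^ n : unitary (H →L[ℂ] H)) : H →L[ℂ] H) (X φ₀)) :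
    ∀ n k : ℤ, ⟪Ψ n, ((A ^ k : unitary (H →L[ℂ] H)) : H →L[ℂ] H) φ₀⟫_ℂ =
      if n = k then 1 else 0 := by
  intro n k
  obtain rfl : c = fourierCoeffIco fun p => (g p : ℂ) := funext hc
  have hfcoef' : ∀ j, fourierCoeffIco (fun p => (f p : ℂ)) j = _ := hfcoef
  have hfg' : (fun p => (f p : ℂ) * g p) =ᵐ[volume.restrict (Ico 0 (2 * π))] fun _ => 1 := by
    filter_upwards [hfg] with p hp
    exact_mod_cast hp
  have hconv := hasSum_fourierCoeffIco_mul_fourierCoeffIco_sub (f := fun p => (f p : ℂ))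
    (g := fun p => (g p : ℂ)) hf.ofReal hg.ofReal hcsum (k - n)
  rw [fourierCoeffIco_congr_ae hfg', fourierCoeffIco_one] at hconv
  simp only [hfcoef'] at hconv
  rw [hΨ, ← inner_conj_symm, inner_zpow_apply_zpow_apply,
    (hasSum_inner_zpow_apply A hX φ₀ (k - n)).unique hconv]
  rcases eq_or_ne n k with rfl | hnk
  · simp
  · simp [sub_eq_zero, hnk, hnk.symm]
end

section
/- Let L be a positive integer, a = √(2πL), and let φ₀ : ℝ → ℝ be the normalized Gaussian φ₀(x) = π^{-1/4} e^{-x²/2}. Then for all n₁, n₂ ∈ ℤ, ∫_ℝ e^{-i a n₁ x} φ₀(x − n₂ a) φ₀(x) dx = (−1)^{L n₁ n₂} e^{-(π/2) L (n₁² + n₂²)}. (This is the overlap ⟨T₁^{n₁}T₂^{n₂}φ₀, φ₀⟩ of the coherent states generated from φ₀ by the modulation T₁ : f(x) ↦ e^{iax}f(x) and the translation T₂ : f(x) ↦ f(x−a), with the L² inner product conjugate-linear in its first argument.) -/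
open MeasureTheory

/-- For `a = √(2πL)` and the normalized Gaussian
`φ₀(x) = π^{-1/4} e^{-x²/2}`, the coherent-state overlaps are
`⟨T₁^{n₁} T₂^{n₂} φ₀, φ₀⟩ = ∫ e^{-i a n₁ x} φ₀(x - n₂ a) φ₀(x) dx
 = (-1)^{L n₁ n₂} e^{-(π/2) L (n₁² + n₂²)}`. -/
theorem stmt11 (L : ℕ) (hL : 0 < L) (a : ℝ) (ha : a = Real.sqrt (2 * Real.pi * L))
    (φ₀ : ℝ → ℝ)
    (hφ₀ : ∀ x : ℝ, φ₀ x = Real.pi ^ (-(1:ℝ)/4) * Real.exp (-x ^ 2 / 2)) :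
    ∀ n₁ n₂ : ℤ,
      ∫ x : ℝ, Complex.exp (-Complex.I * a * n₁ * x) * (φ₀ (x - n₂ * a) : ℂ) * (φ₀ x : ℂ) =
        (-1 : ℂ) ^ ((L : ℤ) * n₁ * n₂) *
          Real.exp (-(Real.pi / 2) * L * ((n₁ : ℝ) ^ 2 + (n₂ : ℝ) ^ 2)) := by
  intro n₁ n₂
  have ha2 : (a : ℝ) ^ 2 = 2 * Real.pi * L := by
    rw [ha, Real.sq_sqrt]; positivity
  set c : ℂ := (n₂ : ℂ) * a - Complex.I * a * n₁ with hc
  set d : ℂ := -((n₂ : ℂ) * a) ^ 2 / 2 with hd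
  have hpow : ((Real.pi ^ (-(1:ℝ)/4) : ℝ) : ℂ) * ((Real.pi ^ (-(1:ℝ)/4) : ℝ) : ℂ)
      = ((Real.pi ^ (-(1:ℝ)/2) : ℝ) : ℂ) := by
    rw [← Complex.ofReal_mul, ← Real.rpow_add Real.pi_pos]; norm_num
  have key : ∀ x : ℝ,
      Complex.exp (-Complex.I * a * n₁ * x) * (φ₀ (x - n₂ * a) : ℂ) * (φ₀ x : ℂ) =
      ((Real.pi ^ (-(1:ℝ)/2) : ℝ) : ℂ) * Complex.exp ((-1) * x ^ 2 + c * x + d) := by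
    intro x
    rw [hφ₀, hφ₀]
    push_cast
    rw [show Complex.exp (-Complex.I * a * n₁ * x) *
        ((Real.pi ^ (-(1:ℝ)/4) : ℝ) * Complex.exp (-((x:ℂ) - n₂ * a) ^ 2 / 2)) *
        ((Real.pi ^ (-(1:ℝ)/4) : ℝ) * Complex.exp (-(x:ℂ) ^ 2 / 2)) =
        ((Real.pi ^ (-(1:ℝ)/4) : ℝ) : ℂ) * ((Real.pi ^ (-(1:ℝ)/4) : ℝ) : ℂ) *
        (Complex.exp (-Complex.I * a * n₁ * x) * Complex.exp (-((x:ℂ) - n₂ * a) ^ 2 / 2) *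
         Complex.exp (-(x:ℂ) ^ 2 / 2)) by ring, hpow,
      ← Complex.exp_add, ← Complex.exp_add]
    congr 1
    rw [hc, hd]; ring
  rw [MeasureTheory.integral_congr_ae (Filter.Eventually.of_forall key),
    MeasureTheory.integral_const_mul, integral_cexp_quadratic (by norm_num : (-1:ℂ).re < 0)]
  have h1 : ((Real.pi ^ (-(1:ℝ)/2) : ℝ) : ℂ) * ((Real.pi : ℂ) / -(-1)) ^ (1/2 : ℂ) = 1 := by
    rw [neg_neg, div_one, show (1/2 : ℂ) = ((1/2 : ℝ) : ℂ) by norm_num,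
      ← Complex.ofReal_cpow Real.pi_pos.le, ← Complex.ofReal_mul,
      ← Real.rpow_add Real.pi_pos]
    norm_num
  rw [← mul_assoc, h1, one_mul]
  have hexp : d - c ^ 2 / (4 * (-1)) =
      ((-(Real.pi / 2) * L * ((n₁ : ℝ) ^ 2 + (n₂ : ℝ) ^ 2) : ℝ) : ℂ) +
      (((L : ℤ) * n₁ * n₂ : ℤ) : ℂ) * (-(Real.pi : ℂ) * Complex.I) := by
    have hA : (a : ℂ) ^ 2 = 2 * (Real.pi : ℂ) * L := by exact_mod_cast ha2
    rw [hc, hd]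
    push_cast
    linear_combination (-(n₂:ℂ)^2/4 + Complex.I^2*(n₁:ℂ)^2/4 - Complex.I*(n₁:ℂ)*(n₂:ℂ)/2) * hA
      + ((Real.pi:ℂ)/2*(L:ℂ)*(n₁:ℂ)^2) * Complex.I_sq
  rw [hexp, Complex.exp_add, Complex.ofReal_exp]
  have h2 : Complex.exp ((((L : ℤ) * n₁ * n₂ : ℤ) : ℂ) * (-(Real.pi : ℂ) * Complex.I)) =
      (-1 : ℂ) ^ ((L : ℤ) * n₁ * n₂) := by
    rw [show (-(Real.pi : ℂ) * Complex.I) = -((Real.pi:ℂ) * Complex.I) by ring,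
      Complex.exp_int_mul, Complex.exp_neg, Complex.exp_pi_mul_I]
    simp only [← inv_zpow, inv_neg, inv_one]
  rw [h2]; ring
end

section
/- Let H be a complex Hilbert space with inner product ⟨·,·⟩ conjugate-linear in the first argument, let (e_n)_{n∈ι} be a Hilbert (orthonormal) basis of H, and let X be a bounded positive invertible operator on H with positive square root X^{1/2}. Suppose φ_n ∈ H satisfies X^{1/2} φ_n = e_n for every n, and set Ψ_n = X φ_n. Then for every f ∈ H: (i) Σ_n ⟨φ_n, f⟩ φ_n = X⁻¹ f, (ii) Σ_n ⟨Ψ_n, f⟩ Ψ_n = X f, and (iii) Σ_n ⟨Ψ_n, f⟩ φ_n = f, all sums converging in H. -/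
open scoped InnerProductSpace

/-- Let `(e_n)` be a Hilbert basis of `H`, `X` a bounded positive invertible
operator with positive square root `X^{1/2}`, and `φ_n` with `X^{1/2} φ_n = e_n`,
`Ψ_n = X φ_n`. Then for every `f ∈ H`: (i) `∑ ⟪φ_n, f⟫ φ_n = X⁻¹ f` (the frame operator
`S_φ` is `X⁻¹`), (ii) `∑ ⟪Ψ_n, f⟫ Ψ_n = X f` (`S_Ψ = X`), and (iii) `∑ ⟪Ψ_n, f⟫ φ_n = f`
(resolution of the identity for the biorthogonal pair). -/
theorem stmt17 {H : Type*} {ι : Type*} [NormedAddCommGroup H] [InnerProductSpace ℂ H]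
    [CompleteSpace H]
    (b : HilbertBasis ι ℂ H)
    (X sqrtX Xinv : H →L[ℂ] H)
    (hX : X.IsPositive) (hsqrtX : sqrtX.IsPositive) (hsq : sqrtX * sqrtX = X)
    (hXinv1 : X * Xinv = 1) (hXinv2 : Xinv * X = 1)
    (φ : ι → H) (hφ : ∀ n, sqrtX (φ n) = b n)
    (Ψ : ι → H) (hΨ : ∀ n, Ψ n = X (φ n)) :
    ∀ f : H,
      HasSum (fun n => ⟪φ n, f⟫_ℂ • φ n) (Xinv f) ∧
      HasSum (fun n => ⟪Ψ n, f⟫_ℂ • Ψ n) (X f) ∧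
      HasSum (fun n => ⟪Ψ n, f⟫_ℂ • φ n) f := by
  intro f
  set T : H →L[ℂ] H := Xinv * sqrtX with hT
  -- X commutes with sqrtX
  have h1 : X * sqrtX = sqrtX * X := by rw [← hsq, mul_assoc]
  -- Xinv commutes with sqrtX
  have hcomm : sqrtX * Xinv = Xinv * sqrtX := by
    calc sqrtX * Xinv = (Xinv * X) * (sqrtX * Xinv) := by rw [hXinv2, one_mul]
      _ = Xinv * ((X * sqrtX) * Xinv) := by simp only [mul_assoc]
      _ = Xinv * ((sqrtX * X) * Xinv) := by rw [h1]
      _ = (Xinv * sqrtX) * (X * Xinv) := by simp only [mul_assoc]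
      _ = Xinv * sqrtX := by rw [hXinv1, mul_one]
  have hTs : T * sqrtX = 1 := by
    rw [hT, mul_assoc, hsq, hXinv2]
  have hTT : T * T = Xinv := by
    calc T * T = Xinv * ((sqrtX * Xinv) * sqrtX) := by simp only [hT, mul_assoc]
      _ = Xinv * ((Xinv * sqrtX) * sqrtX) := by rw [hcomm]
      _ = Xinv * (Xinv * X) := by rw [mul_assoc, hsq]
      _ = Xinv := by rw [hXinv2, mul_one]
  have hXT : X * T = sqrtX := by
    rw [hT, ← mul_assoc, hXinv1, one_mul]
  -- self-adjointness
  have hsaS : IsSelfAdjoint sqrtX := hsqrtX.isSelfAdjoint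
  have hsaX : IsSelfAdjoint X := hX.isSelfAdjoint
  have hsaXinv : IsSelfAdjoint Xinv := by
    have h2 : star Xinv * X = 1 := by
      have := congrArg star hXinv1
      rwa [star_mul, star_one, hsaX.star_eq] at this
    calc star Xinv = star Xinv * (X * Xinv) := by rw [hXinv1, mul_one]
      _ = (star Xinv * X) * Xinv := by rw [mul_assoc]
      _ = Xinv := by rw [h2, one_mul]
  have hsaT : IsSelfAdjoint T := by
    have : star T = sqrtX * Xinv := by rw [hT, star_mul, hsaS.star_eq, hsaXinv.star_eq]
    rw [IsSelfAdjoint, this, hcomm]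
  -- key identities for the vectors
  have hφT : ∀ n, φ n = T (b n) := by
    intro n
    have := congrArg (fun g : H →L[ℂ] H => g (φ n)) hTs
    simp only [ContinuousLinearMap.mul_apply, ContinuousLinearMap.one_apply] at this
    rw [hφ n] at this
    exact this.symm
  have hΨS : ∀ n, Ψ n = sqrtX (b n) := by
    intro n
    rw [hΨ n, hφT n]
    have := congrArg (fun g : H →L[ℂ] H => g (b n)) hXT
    simpa [ContinuousLinearMap.mul_apply] using this
  -- inner product transfer for self-adjoint operators
  have hinner : ∀ (A : H →L[ℂ] H), IsSelfAdjoint A → ∀ (x y : H),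
      ⟪A x, y⟫_ℂ = ⟪x, A y⟫_ℂ := by
    intro A hA x y
    rw [← hA.adjoint_eq, ContinuousLinearMap.adjoint_inner_left, hA.adjoint_eq]
  -- the key summation lemma
  have key : ∀ (A : H →L[ℂ] H) (g : H), HasSum (fun n => ⟪b n, g⟫_ℂ • A (b n)) (A g) := by
    intro A g
    have := (b.hasSum_repr g).mapL A
    simpa only [map_smul, b.repr_apply_apply] using this
  refine ⟨?_, ?_, ?_⟩
  · -- (i)
    have := key T (T f)
    have hI : Xinv f = T (T f) := by
      have := congrArg (fun g : H →L[ℂ] H => g f) hTT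
      simpa [ContinuousLinearMap.mul_apply] using this.symm
    rw [hI]
    convert key T (T f) using 2 with n
    rw [hφT n, hinner T hsaT]
  · -- (ii)
    have hII : X f = sqrtX (sqrtX f) := by
      have := congrArg (fun g : H →L[ℂ] H => g f) hsq
      simpa [ContinuousLinearMap.mul_apply] using this.symm
    rw [hII]
    convert key sqrtX (sqrtX f) using 2 with n
    rw [hΨS n, hinner sqrtX hsaS]
  · -- (iii)
    have hIII : f = T (sqrtX f) := by
      have := congrArg (fun g : H →L[ℂ] H => g f) hTs
      simpa [ContinuousLinearMap.mul_apply] using this.symm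
    have h := key T (sqrtX f)
    rw [← hIII] at h
    convert h using 2 with n
    rw [hΨS n, hφT n, hinner sqrtX hsaS]
end

section
/- Let H be a complex Hilbert space with inner product ⟨·,·⟩ conjugate-linear in the first argument, (e_n)_{n∈ι} a Hilbert (orthonormal) basis of H, X a bounded positive invertible operator on H with positive square root X^{1/2} (and X^{-1/2} = (X^{1/2})⁻¹), φ_n ∈ H with X^{1/2}φ_n = e_n, Ψ_n = Xφ_n, and let (ε_n)_{n∈ι} be a bounded family of real numbers. Let h and T be the bounded operators on H determined by h f = Σ_n ε_n ⟨e_n, f⟩ e_n and T f = Σ_n ε_n ⟨Ψ_n, f⟩ φ_n for all f ∈ H (both sums converge in H and define bounded operators). Then: (i) h is self-adjoint; (ii) T φ_n = ε_n φ_n and T† Ψ_n = ε_n Ψ_n for every n, where T† is the Hilbert adjoint of T; (iii) the intertwining relations X∘T = T†∘X, h∘X^{-1/2} = X^{-1/2}∘T†, and T∘X^{-1/2} = X^{-1/2}∘h hold. -/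
/-!
`h` is diagonal in the basis `e_n` with real eigenvalues, hence self-adjoint. Since
`⟪Ψ_n, f⟫ = ⟪e_n, X^{1/2} f⟫` and `φ_n = X^{-1/2} e_n`, applying `X^{-1/2}` to the expansion of
`h (X^{1/2} f)` gives `T = X^{-1/2} h X^{1/2}`, so `T† = X^{1/2} h X^{-1/2}`. Every claim is then
an identity in the ring of bounded operators.
-/

open scoped InnerProductSpace

theorem IsSelfAdjoint.of_mul_eq_one {R : Type*} [Monoid R] [StarMul R] {s t : R}
    (hs : IsSelfAdjoint s) (hst : s * t = 1) (hts : t * s = 1) : IsSelfAdjoint t :=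
  letI : Invertible s := ⟨t, hts, hst⟩
  (IsSelfAdjoint.invOf_iff s).mpr hs

namespace HilbertBasis

variable {𝕜 H ι : Type*} [RCLike 𝕜] [NormedAddCommGroup H] [InnerProductSpace 𝕜 H]

def IsDiagonal (b : HilbertBasis ι 𝕜 H) (c : ι → 𝕜) (A : H →L[𝕜] H) : Prop :=
  ∀ f, HasSum (fun n => (c n * ⟪b n, f⟫_𝕜) • b n) (A f)

variable {b : HilbertBasis ι 𝕜 H} {c : ι → 𝕜} {A : H →L[𝕜] H}

theorem IsDiagonal.apply_basis (hA : b.IsDiagonal c A) (n : ι) : A (b n) = c n • b n := by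
  classical
  refine (hA (b n)).unique ((hasSum_ite_eq n (c n • b n)).congr_fun fun m => ?_)
  rw [orthonormal_iff_ite.mp b.orthonormal]
  split_ifs with h
  · rw [h, mul_one]
  · rw [mul_zero, zero_smul]

theorem IsDiagonal.hasSum_inner (hA : b.IsDiagonal c A) (x y : H) :
    HasSum (fun n => c n * ⟪b n, y⟫_𝕜 * ⟪x, b n⟫_𝕜) ⟪x, A y⟫_𝕜 :=
  ((innerSL 𝕜 x).hasSum (hA y)).congr_fun fun n => by
    rw [innerSL_apply_apply, inner_smul_right]

theorem IsDiagonal.isSelfAdjoint [CompleteSpace H] (hA : b.IsDiagonal c A)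
    (hc : ∀ n, star (c n) = c n) : IsSelfAdjoint A := by
  refine ContinuousLinearMap.isSelfAdjoint_iff_isSymmetric.mpr fun x y => ?_
  have hAx : HasSum (fun n => star (c n * ⟪b n, x⟫_𝕜 * ⟪y, b n⟫_𝕜)) ⟪A x, y⟫_𝕜 := by
    rw [← inner_conj_symm]
    exact (hA.hasSum_inner y x).star
  refine hAx.unique ((hA.hasSum_inner x y).congr_fun fun n => ?_)
  simp only [star_mul', hc, RCLike.star_def, inner_conj_symm]
  ring

theorem IsDiagonal.eq_comp_comp (hA : b.IsDiagonal c A) {S : H →L[𝕜] H}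
    (hS : (S : H →ₗ[𝕜] H).IsSymmetric) (L : H →L[𝕜] H) {T : H →L[𝕜] H}
    (hT : ∀ f, HasSum (fun n => (c n * ⟪S (b n), f⟫_𝕜) • L (b n)) (T f)) :
    T = L ∘L A ∘L S := by
  ext f
  refine (hT f).unique ((L.hasSum (hA (S f))).congr_fun fun n => ?_)
  rw [map_smul]
  exact congrArg (fun z => (c n * z) • L (b n)) (hS (b n) f)

end HilbertBasis

theorem stmt19_general {H : Type*} {ι : Type*} [NormedAddCommGroup H] [InnerProductSpace ℂ H]
    [CompleteSpace H]
    (b : HilbertBasis ι ℂ H)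
    (X sqrtX sqrtXinv : H →L[ℂ] H)
    (hsqrtX : sqrtX.IsPositive) (hsq : sqrtX * sqrtX = X)
    (hinv1 : sqrtX * sqrtXinv = 1) (hinv2 : sqrtXinv * sqrtX = 1)
    (φ : ι → H) (hφ : ∀ n, sqrtX (φ n) = b n)
    (Ψ : ι → H) (hΨ : ∀ n, Ψ n = X (φ n))
    (ε : ι → ℝ)
    (hOp T : H →L[ℂ] H)
    (hhOp : ∀ f : H, HasSum (fun n => ((ε n : ℂ) * ⟪b n, f⟫_ℂ) • b n) (hOp f))
    (hT : ∀ f : H, HasSum (fun n => ((ε n : ℂ) * ⟪Ψ n, f⟫_ℂ) • φ n) (T f)) :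
    IsSelfAdjoint hOp ∧
      (∀ n, T (φ n) = (ε n : ℂ) • φ n) ∧
      (∀ n, ContinuousLinearMap.adjoint T (Ψ n) = (ε n : ℂ) • Ψ n) ∧
      X ∘L T = ContinuousLinearMap.adjoint T ∘L X ∧
      hOp ∘L sqrtXinv = sqrtXinv ∘L ContinuousLinearMap.adjoint T ∧
      T ∘L sqrtXinv = sqrtXinv ∘L hOp := by
  have hS : IsSelfAdjoint sqrtX := hsqrtX.isSelfAdjoint
  have hSinv : IsSelfAdjoint sqrtXinv := hS.of_mul_eq_one hinv1 hinv2
  have hinv1_left : ∀ R, sqrtX * (sqrtXinv * R) = R := fun R => by rw [← mul_assoc, hinv1, one_mul]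
  have hinv2_left : ∀ R, sqrtXinv * (sqrtX * R) = R := fun R => by rw [← mul_assoc, hinv2, one_mul]
  have hinv2_apply : ∀ x, sqrtXinv (sqrtX x) = x := fun x => by
    rw [← mul_apply_eq_comp, hinv2, one_apply_eq_self]
  have hφ_eq : ∀ n, φ n = sqrtXinv (b n) := fun n => by rw [← hφ n, hinv2_apply]
  have hΨ_eq : ∀ n, Ψ n = sqrtX (b n) := fun n => by rw [hΨ n, ← hsq, mul_apply_eq_comp, hφ n]
  have hA : b.IsDiagonal (fun n => (ε n : ℂ)) hOp := hhOp
  have hOp_sa : IsSelfAdjoint hOp := hA.isSelfAdjoint fun n => Complex.conj_ofReal (ε n)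
  have hTeq : T = sqrtXinv * hOp * sqrtX :=
    hA.eq_comp_comp hS.isSymmetric sqrtXinv (by simpa only [hΨ_eq, hφ_eq] using hT)
  have hTadj : ContinuousLinearMap.adjoint T = sqrtX * hOp * sqrtXinv := by
    rw [← ContinuousLinearMap.star_eq_adjoint, hTeq, star_mul, star_mul, hS.star_eq,
      hOp_sa.star_eq, hSinv.star_eq, mul_assoc]
  refine ⟨hOp_sa, fun n => ?_, fun n => ?_, ?_, ?_, ?_⟩
  · rw [hTeq, mul_apply_eq_comp, mul_apply_eq_comp, hφ, hA.apply_basis, map_smul, ← hφ_eq]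
  · rw [hTadj, hΨ_eq, mul_apply_eq_comp, mul_apply_eq_comp, hinv2_apply, hA.apply_basis,
      map_smul]
  · rw [hTadj, hTeq, ← hsq]
    simp only [← ContinuousLinearMap.mul_def, mul_assoc, hinv1_left, hinv2_left]
  · rw [hTadj]
    simp only [← ContinuousLinearMap.mul_def, mul_assoc, hinv2_left]
  · rw [hTeq]
    simp only [← ContinuousLinearMap.mul_def, mul_assoc, hinv1, mul_one]

/-- With a Hilbert basis `(e_n)`, a bounded positive invertible `X` with
positive square root `X^{1/2}` (inverse `X^{-1/2}`), vectors `φ_n = X^{-1/2} e_n`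
(i.e. `X^{1/2} φ_n = e_n`), `Ψ_n = X φ_n`, a bounded real family `(ε_n)`, and the bounded
operators `h f = ∑ ε_n ⟪e_n, f⟫ e_n`, `T f = ∑ ε_n ⟪Ψ_n, f⟫ φ_n`: (i) `h` is self-adjoint;
(ii) `T φ_n = ε_n φ_n` and `T† Ψ_n = ε_n Ψ_n`; (iii) the intertwining relations
`X ∘ T = T† ∘ X`, `h ∘ X^{-1/2} = X^{-1/2} ∘ T†`, and `T ∘ X^{-1/2} = X^{-1/2} ∘ h` hold. -/
theorem stmt19 {H : Type*} {ι : Type*} [NormedAddCommGroup H] [InnerProductSpace ℂ H]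
    [CompleteSpace H]
    (b : HilbertBasis ι ℂ H)
    (X sqrtX sqrtXinv : H →L[ℂ] H)
    (hX : X.IsPositive) (hsqrtX : sqrtX.IsPositive) (hsq : sqrtX * sqrtX = X)
    (hinv1 : sqrtX * sqrtXinv = 1) (hinv2 : sqrtXinv * sqrtX = 1)
    (φ : ι → H) (hφ : ∀ n, sqrtX (φ n) = b n)
    (Ψ : ι → H) (hΨ : ∀ n, Ψ n = X (φ n))
    (ε : ι → ℝ) (hε : ∃ M : ℝ, ∀ n, |ε n| ≤ M)
    (hOp T : H →L[ℂ] H)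
    (hhOp : ∀ f : H, HasSum (fun n => ((ε n : ℂ) * ⟪b n, f⟫_ℂ) • b n) (hOp f))
    (hT : ∀ f : H, HasSum (fun n => ((ε n : ℂ) * ⟪Ψ n, f⟫_ℂ) • φ n) (T f)) :
    IsSelfAdjoint hOp ∧
      (∀ n, T (φ n) = (ε n : ℂ) • φ n) ∧
      (∀ n, ContinuousLinearMap.adjoint T (Ψ n) = (ε n : ℂ) • Ψ n) ∧
      X ∘L T = ContinuousLinearMap.adjoint T ∘L X ∧
      hOp ∘L sqrtXinv = sqrtXinv ∘L ContinuousLinearMap.adjoint T ∧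
      T ∘L sqrtXinv = sqrtXinv ∘L hOp :=
  stmt19_general b X sqrtX sqrtXinv hsqrtX hsq hinv1 hinv2 φ hφ Ψ hΨ ε hOp T hhOp hT
end
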